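/- arXiv:2003.03743 — 3 statements merged into one kernel-verified Lean document; each statement's English description precedes it below -/
import Mathlib

section
/- Let H ⊂ SL_d(ℤ) ⋉ ℝ^d be a subgroup and S a generating set of H. Let Γ be the image of H under the projection to SL_d(ℤ). Assume that Γ acts strongly irreducibly on ℝ^d. Then for any x ∈ 𝕋^d, the following are equivalent: (1) the orbit Hx ⊂ 𝕋^d is finite; (2) there exists a positive integer q such that for all g ∈ S, gx − x ∈ (1/q)ℤ^d/ℤ^d; (3) there exists a positive integer q such that for all g ∈ H, gx − x ∈ (1/q)ℤ^d/ℤ^d. -/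
set_option synthInstance.maxHeartbeats 1000000
set_option maxHeartbeats 1000000
set_option linter.unusedSectionVars false

open MeasureTheory Matrix Filter Metric
open scoped BigOperators ENNReal Real

noncomputable section

instance : Fact ((0:ℝ) < 1) := ⟨one_pos⟩

abbrev SLZ (d : ℕ) := Matrix.SpecialLinearGroup (Fin d) ℤ

abbrev Torus (d : ℕ) := Fin d → AddCircle (1 : ℝ)

instance (d : ℕ) : MeasurableSpace (SLZ d) := ⊤

/-- Generic affine group `G ⋉ V` where `G` acts on `V` by additive automorphisms. -/
@[ext] structure AffOf (G V : Type*) where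
  lin : G
  trans : V

namespace AffOf

variable {G V : Type*} [Group G] [AddCommGroup V] [DistribMulAction G V]

instance : Mul (AffOf G V) := ⟨fun g h => ⟨g.lin * h.lin, g.lin • h.trans + g.trans⟩⟩
instance : One (AffOf G V) := ⟨⟨1, 0⟩⟩
instance : Inv (AffOf G V) := ⟨fun g => ⟨g.lin⁻¹, -(g.lin⁻¹ • g.trans)⟩⟩

@[simp] lemma mul_lin (g h : AffOf G V) : (g * h).lin = g.lin * h.lin := rfl
@[simp] lemma mul_trans (g h : AffOf G V) : (g * h).trans = g.lin • h.trans + g.trans := rfl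
@[simp] lemma one_lin : (1 : AffOf G V).lin = 1 := rfl
@[simp] lemma one_trans : (1 : AffOf G V).trans = 0 := rfl

instance : Group (AffOf G V) where
  mul_assoc a b c := by
    ext
    · exact mul_assoc _ _ _
    · show (a.lin * b.lin) • c.trans + (a.lin • b.trans + a.trans)
        = a.lin • (b.lin • c.trans + b.trans) + a.trans
      rw [mul_smul, smul_add, add_assoc]
  one_mul a := by
    ext
    · exact one_mul _
    · show (1 : G) • a.trans + 0 = a.trans
      simp
  mul_one a := by
    ext
    · exact mul_one _
    · show a.lin • (0 : V) + a.trans = a.trans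
      simp
  inv_mul_cancel a := by
    ext
    · exact inv_mul_cancel _
    · show a.lin⁻¹ • a.trans + -(a.lin⁻¹ • a.trans) = 0
      simp

/-- The projection onto the linear part, as a group homomorphism. -/
def linHom : AffOf G V →* G where
  toFun := AffOf.lin
  map_one' := rfl
  map_mul' _ _ := rfl

/-- The affine action of `AffOf G V` on `V`. -/
def aff (g : AffOf G V) (v : V) : V := g.lin • v + g.trans

/-- Equivalence with the product type (used for `Fintype`/measurable structures). -/
def equivProd : AffOf G V ≃ G × V where
  toFun g := (g.lin, g.trans)
  invFun p := ⟨p.1, p.2⟩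
  left_inv _ := rfl
  right_inv _ := rfl

end AffOf

instance {G V : Type*} [Fintype G] [Fintype V] : Fintype (AffOf G V) :=
  Fintype.ofEquiv _ (AffOf.equivProd (G := G) (V := V)).symm

instance {G V : Type*} [DecidableEq G] [DecidableEq V] : DecidableEq (AffOf G V) :=
  fun a b => decidable_of_iff (a.lin = b.lin ∧ a.trans = b.trans) AffOf.ext_iff.symm

instance {G V : Type*} [MeasurableSpace G] [MeasurableSpace V] :
    MeasurableSpace (AffOf G V) :=
  MeasurableSpace.comap AffOf.equivProd inferInstance

/-- The action of `SL_d(ℤ)` on the torus `𝕋^d`. -/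
instance torusAction (d : ℕ) : DistribMulAction (SLZ d) (Torus d) where
  smul γ x := fun i => ∑ j, (γ.1 i j) • x j
  one_smul x := by
    funext i
    show ∑ j, ((1 : SLZ d).1 i j) • x j = x i
    simp [Matrix.one_apply, ite_smul]
  mul_smul γ₁ γ₂ x := by
    funext i
    show ∑ j, ((γ₁ * γ₂).1 i j) • x j = ∑ k, (γ₁.1 i k) • ∑ j, (γ₂.1 k j) • x j
    simp only [Matrix.SpecialLinearGroup.coe_mul, Matrix.mul_apply, Finset.sum_smul,
      Finset.smul_sum, mul_smul]
    exact Finset.sum_comm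
  smul_zero γ := by
    funext i
    show ∑ j, (γ.1 i j) • (0 : AddCircle (1:ℝ)) = 0
    simp
  smul_add γ x y := by
    funext i
    show ∑ j, (γ.1 i j) • (x j + y j) = (∑ j, (γ.1 i j) • x j) + ∑ j, (γ.1 i j) • y j
    simp [smul_add, Finset.sum_add_distrib]

/-- `SL_d(ℤ) ⋉ 𝕋^d`. -/
abbrev Aff (d : ℕ) := AffOf (SLZ d) (Torus d)

/-- Cast an integer matrix in `SL_d(ℤ)` to a real matrix. -/
def toR {d : ℕ} (γ : SLZ d) : Matrix (Fin d) (Fin d) ℝ := γ.1.map (Int.cast : ℤ → ℝ)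

/-- Cast an integer matrix in `SL_d(ℤ)` to a rational matrix. -/
def toQ {d : ℕ} (γ : SLZ d) : Matrix (Fin d) (Fin d) ℚ := γ.1.map (Int.cast : ℤ → ℚ)

/-- Cast an integer matrix in `SL_d(ℤ)` to a complex matrix. -/
def toC {d : ℕ} (γ : SLZ d) : Matrix (Fin d) (Fin d) ℂ := γ.1.map (Int.cast : ℤ → ℂ)

lemma toR_one {d : ℕ} : toR (1 : SLZ d) = 1 := by
  rw [toR, Matrix.SpecialLinearGroup.coe_one, Matrix.map_one _ Int.cast_zero Int.cast_one]

lemma toR_mul {d : ℕ} (γ₁ γ₂ : SLZ d) : toR (γ₁ * γ₂) = toR γ₁ * toR γ₂ := by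
  simp only [toR, Matrix.SpecialLinearGroup.coe_mul]
  exact Matrix.map_mul (f := Int.castRingHom ℝ)

/-- The action of `SL_d(ℤ)` on `ℝ^d`. -/
instance realAction (d : ℕ) : DistribMulAction (SLZ d) (Fin d → ℝ) where
  smul γ v := (toR γ).mulVec v
  one_smul v := by show (toR 1).mulVec v = v; rw [toR_one, Matrix.one_mulVec]
  mul_smul γ₁ γ₂ v := by
    show (toR (γ₁ * γ₂)).mulVec v = (toR γ₁).mulVec ((toR γ₂).mulVec v)
    rw [toR_mul, Matrix.mulVec_mulVec]
  smul_zero γ := by show (toR γ).mulVec 0 = 0; rw [Matrix.mulVec_zero]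
  smul_add γ v w := by
    show (toR γ).mulVec (v + w) = (toR γ).mulVec v + (toR γ).mulVec w
    rw [Matrix.mulVec_add]

/-- `SL_d(ℤ) ⋉ ℝ^d`. -/
abbrev AffR (d : ℕ) := AffOf (SLZ d) (Fin d → ℝ)

/-- The action of `SL_d(𝔽_p)` on `𝔽_p^d`. -/
instance modpAction (p d : ℕ) :
    DistribMulAction (Matrix.SpecialLinearGroup (Fin d) (ZMod p)) (Fin d → ZMod p) where
  smul γ v := γ.1.mulVec v
  one_smul v := by
    show (1 : Matrix.SpecialLinearGroup (Fin d) (ZMod p)).1.mulVec v = v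
    simp [Matrix.SpecialLinearGroup.coe_one, Matrix.one_mulVec]
  mul_smul γ₁ γ₂ v := by
    show (γ₁ * γ₂).1.mulVec v = γ₁.1.mulVec (γ₂.1.mulVec v)
    rw [Matrix.SpecialLinearGroup.coe_mul, Matrix.mulVec_mulVec]
  smul_zero γ := Matrix.mulVec_zero _
  smul_add γ v w := Matrix.mulVec_add _ _ _

/-- `SL_d(𝔽_p) ⋉ 𝔽_p^d`. -/
abbrev AffP (p d : ℕ) := AffOf (Matrix.SpecialLinearGroup (Fin d) (ZMod p)) (Fin d → ZMod p)

instance (p d : ℕ) : MeasurableSpace (Matrix.SpecialLinearGroup (Fin d) (ZMod p)) := ⊤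
instance (p d : ℕ) : MeasurableSpace (Fin d → ZMod p) := ⊤

/-- The projection of `ℝ^d` onto the torus. -/
def projT {d : ℕ} (v : Fin d → ℝ) : Torus d := fun i => (v i : AddCircle (1:ℝ))

/-- The affine action of `SL_d(ℤ) ⋉ ℝ^d` on the torus. -/
def affRT {d : ℕ} (g : AffR d) (x : Torus d) : Torus d := g.lin • x + projT g.trans

/-- The support of a measure on a discrete-like space. -/
def msupport {α : Type*} [MeasurableSpace α] (μ : Measure α) : Set α := {a | μ {a} ≠ 0}

/-- Convolution of two measures on a group. -/
def mconv {G : Type*} [Mul G] [MeasurableSpace G] (μ ν : Measure G) : Measure G :=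
  (μ.prod ν).map fun p => p.1 * p.2

/-- Convolution power `μ^{*n}` (with `μ^{*0} = δ_1`). -/
def mconvPow {G : Type*} [Monoid G] [MeasurableSpace G] (μ : Measure G) : ℕ → Measure G
  | 0 => Measure.dirac 1
  | n + 1 => mconv μ (mconvPow μ n)

/-- Convolution of a measure on a set of transformations with a measure on a space. -/
def aconv {G X : Type*} [MeasurableSpace G] [MeasurableSpace X] (act : G → X → X)
    (μ : Measure G) (ν : Measure X) : Measure X :=
  (μ.prod ν).map fun p => act p.1 p.2

/-- `μ^{*n} * δ_x` for the affine random walk on the torus. -/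
def walk {d : ℕ} (μ : Measure (Aff d)) (x : Torus d) (n : ℕ) : Measure (Torus d) :=
  aconv AffOf.aff (mconvPow μ n) (Measure.dirac x)

/-- The Fourier coefficient `ν̂(a) = ∫ e^{2πi⟨a,x⟩} dν(x)` of a measure on the torus. -/
def fcoef {d : ℕ} (ν : Measure (Torus d)) (a : Fin d → ℤ) : ℂ :=
  ∫ x, (∏ i, fourier (a i) (x i)) ∂ν

/-- A sup-type norm of an element of `SL_d(ℤ)`. -/
def matNorm {d : ℕ} (g : SLZ d) : ℝ := ‖fun ij : Fin d × Fin d => (g.1 ij.1 ij.2 : ℝ)‖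

/-- `hasLyap μ₀ l` : the top Lyapunov exponent of `μ₀` exists and equals `l`. -/
def hasLyap {d : ℕ} (μ₀ : Measure (SLZ d)) (l : ℝ) : Prop :=
  Tendsto (fun n : ℕ => (n : ℝ)⁻¹ * ∫ g, Real.log (matNorm g) ∂(mconvPow μ₀ n)) atTop (nhds l)

/-- Strong irreducibility of the action of a set of matrices on `ℝ^d`: no nontrivial finite
union of proper nonzero subspaces is invariant. -/
def SIrredR {d : ℕ} (S : Set (SLZ d)) : Prop :=
  ¬ ∃ F : Finset (Submodule ℝ (Fin d → ℝ)), F.Nonempty ∧ (∀ W ∈ F, W ≠ ⊥ ∧ W ≠ ⊤) ∧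
      ∀ γ ∈ S, ∀ W ∈ F, W.map (Matrix.toLin' (toR γ)) ∈ F

/-- Strong irreducibility of the action of a set of matrices on `ℚ^d`. -/
def SIrredQ {d : ℕ} (S : Set (SLZ d)) : Prop :=
  ¬ ∃ F : Finset (Submodule ℚ (Fin d → ℚ)), F.Nonempty ∧ (∀ W ∈ F, W ≠ ⊥ ∧ W ≠ ⊤) ∧
      ∀ γ ∈ S, ∀ W ∈ F, W.map (Matrix.toLin' (toQ γ)) ∈ F

/-- Irreducibility of the action of a set of matrices on `ℚ^d`. -/
def IrredQ {d : ℕ} (S : Set (SLZ d)) : Prop :=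
  ¬ ∃ W : Submodule ℚ (Fin d → ℚ), W ≠ ⊥ ∧ W ≠ ⊤ ∧
      ∀ γ ∈ S, W.map (Matrix.toLin' (toQ γ)) = W

open scoped Classical in
/-- A proximal element : a simple dominant eigenvalue (over `ℂ`). -/
def IsProximal {d : ℕ} (γ : SLZ d) : Prop :=
  ∃ χ : ℂ, (Matrix.charpoly (toC γ)).roots.count χ = 1 ∧
    ∀ χ' ∈ (Matrix.charpoly (toC γ)).roots, χ' ≠ χ → ‖χ'‖ < ‖χ‖

/-- The Zariski topology on `d × d` complex matrices. -/
def zTop (d : ℕ) : TopologicalSpace (Matrix (Fin d) (Fin d) ℂ) :=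
  TopologicalSpace.generateFrom
    { U | ∃ f : MvPolynomial (Fin d × Fin d) ℂ,
        U = { M | MvPolynomial.eval (fun ij => M ij.1 ij.2) f ≠ 0 } }

/-- Zariski closure of a set of complex matrices. -/
def zclosure {d : ℕ} (S : Set (Matrix (Fin d) (Fin d) ℂ)) : Set (Matrix (Fin d) (Fin d) ℂ) :=
  @closure _ (zTop d) S

/-- The Zariski closure of (the complexification of) `S ⊆ SL_d(ℤ)` is connected. -/
def ZClosureConnected {d : ℕ} (S : Set (SLZ d)) : Prop :=
  @IsConnected _ (zTop d) (zclosure (toC '' S))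

/-- The Zariski closure of `S ⊆ SL_d(ℤ)` is semisimple: every Zariski closed and connected
subgroup which is normalized by the closure and solvable is trivial. -/
def ZClosureSemisimple {d : ℕ} (S : Set (SLZ d)) : Prop :=
  ∀ H : Subgroup (Matrix.GeneralLinearGroup (Fin d) ℂ),
    ((fun g : Matrix.GeneralLinearGroup (Fin d) ℂ => (g : Matrix (Fin d) (Fin d) ℂ)) ''
        (H : Set (Matrix.GeneralLinearGroup (Fin d) ℂ)) ⊆ zclosure (toC '' S)) →
    @IsClosed _ (zTop d) ((fun g : Matrix.GeneralLinearGroup (Fin d) ℂ =>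
        (g : Matrix (Fin d) (Fin d) ℂ)) '' (H : Set (Matrix.GeneralLinearGroup (Fin d) ℂ))) →
    @IsConnected _ (zTop d) ((fun g : Matrix.GeneralLinearGroup (Fin d) ℂ =>
        (g : Matrix (Fin d) (Fin d) ℂ)) '' (H : Set (Matrix.GeneralLinearGroup (Fin d) ℂ))) →
    (∀ g : Matrix.GeneralLinearGroup (Fin d) ℂ,
        (g : Matrix (Fin d) (Fin d) ℂ) ∈ zclosure (toC '' S) →
        ∀ h ∈ H, g * h * g⁻¹ ∈ H) →
    IsSolvable H → H = ⊥

/-- The set `𝒫_Q` of data `(u, x)` giving a trapped orbit of height at most `Q`. -/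
def PQ {d : ℕ} {Ω : Type*} (γ : Ω → SLZ d) (Q : ℝ) : Set ((Ω → Torus d) × Torus d) :=
  { p | ∃ q : ℕ, 1 ≤ q ∧ (q : ℝ) ≤ Q ∧
      ∀ ω : Ω, ∀ i : Fin d,
        q • ((AffOf.aff (⟨γ ω, p.1 ω⟩ : Aff d) p.2 - p.2) i) = 0 }

/-- `α`-energy of a measure on the torus. -/
def energy {d : ℕ} (α : ℝ) (ν : Measure (Torus d)) : ℝ≥0∞ :=
  ∫⁻ q in {q : Torus d × Torus d | q.1 ≠ q.2},
    ENNReal.ofReal ((dist q.1 q.2) ^ (-α)) ∂(ν.prod ν)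

/-- A set is `r`-separated. -/
def IsSep {X : Type*} [PseudoMetricSpace X] (r : ℝ) (S : Set X) : Prop :=
  ∀ x ∈ S, ∀ y ∈ S, x ≠ y → r ≤ dist x y

/-- Finite exponential moment. -/
def expMoment {d : ℕ} (μ₀ : Measure (SLZ d)) : Prop :=
  ∃ α > (0:ℝ), ∫⁻ g, ENNReal.ofReal ((matNorm g) ^ α) ∂μ₀ < ⊤

/-- Reduction modulo `p` of an element of `SL_d(ℤ)`. -/
def redP (p : ℕ) {d : ℕ} (γ : SLZ d) : Matrix.SpecialLinearGroup (Fin d) (ZMod p) :=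
  Matrix.SpecialLinearGroup.map (Int.castRingHom (ZMod p)) γ

/-- The random word `g(ω₁) g(ω₂) ⋯ g(ωₙ)`. -/
def word {G : Type*} [Monoid G] {Ω : Type*} (g : Ω → G) {n : ℕ} (ωs : Fin n → Ω) : G :=
  (List.ofFn fun i => g (ωs i)).prod

/-- The orbit of `x` under a set of elements of `SL_d(𝔽_p)`. -/
def orbitSet {p d : ℕ} (Γs : Set (Matrix.SpecialLinearGroup (Fin d) (ZMod p)))
    (x : Fin d → ZMod p) : Set (Fin d → ZMod p) :=
  (fun γ : Matrix.SpecialLinearGroup (Fin d) (ZMod p) => γ.1.mulVec x) '' Γs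

/-- The Dirac function at `x`. -/
def deltaF {p d : ℕ} (x : Fin d → ZMod p) : (Fin d → ZMod p) → ℝ :=
  fun y => if y = x then 1 else 0

/-- The Koopman operator `𝒜(μ)` applied to a function: `(𝒜(μ)f)(y) = ∑_g μ(g) f(g⁻¹y)`. -/
def pushStep {p d : ℕ} [NeZero p] (μ : AffP p d → ℝ) (f : (Fin d → ZMod p) → ℝ) :
    (Fin d → ZMod p) → ℝ :=
  fun y => ∑ g : AffP p d, μ g * f (AffOf.aff g⁻¹ y)

/-- `L²` norm of a real function on a finite set (counting measure). -/
def l2R {X : Type*} [Fintype X] (f : X → ℝ) : ℝ := Real.sqrt (∑ x, f x ^ 2)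

/-- `L²` norm of a complex function on a finite set (counting measure). -/
def l2C {X : Type*} [Fintype X] (f : X → ℂ) : ℝ := Real.sqrt (∑ x, ‖f x‖ ^ 2)

/-- The `L̂⁴` norm `(p^{-d} ∑_a |φ(a)|⁴)^{1/4}` on the dual of `𝔽_p^d`. -/
def hatL4 {p d : ℕ} [NeZero p] (φ : (Fin d → ZMod p) → ℝ) : ℝ :=
  ((p : ℝ) ^ (-(d : ℤ)) * ∑ a, |φ a| ^ 4) ^ ((1 : ℝ) / 4)

/-- The discrete Fourier transform `f̂(a) = ∑_x e(⟨a,x⟩) f(x)` on `𝔽_p^d`. -/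
def fhat {p d : ℕ} [NeZero p] (f : (Fin d → ZMod p) → ℝ) (a : Fin d → ZMod p) : ℂ :=
  ∑ x, Complex.exp (2 * Real.pi * Complex.I * (((∑ i, a i * x i : ZMod p).val : ℂ)) / (p : ℂ)) * f x

noncomputable instance {p d : ℕ} [NeZero p]
    (Γ : Subgroup (Matrix.SpecialLinearGroup (Fin d) (ZMod p))) : Fintype ↥Γ :=
  Fintype.ofFinite _

/-- The projection of a probability function on `SL_d(𝔽_p) ⋉ 𝔽_p^d` to `Γ`. -/
def projToGamma {p d : ℕ} [NeZero p] (Γ : Subgroup (Matrix.SpecialLinearGroup (Fin d) (ZMod p)))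
    (μ : AffP p d → ℝ) (z : ↥Γ) : ℝ :=
  ∑ v : Fin d → ZMod p, μ ⟨(z : Matrix.SpecialLinearGroup (Fin d) (ZMod p)), v⟩

/-- Spectral gap condition `‖ℒ⁰_θ(μ₀)‖ ≤ c` for the left regular representation of `Γ`
restricted to mean-zero functions. -/
def lregGap {p d : ℕ} [NeZero p] (Γ : Subgroup (Matrix.SpecialLinearGroup (Fin d) (ZMod p)))
    (μ₀ : ↥Γ → ℝ) (c : ℝ) : Prop :=
  ∀ f : ↥Γ → ℂ, (∑ z : ↥Γ, f z) = 0 →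
    l2C (fun z : ↥Γ => ∑ w : ↥Γ, (μ₀ w : ℂ) * f (w⁻¹ * z)) ≤ c * l2C f

end

/-! Let `O = Hx` be finite with `N` points and let `s = ∑ O`. Since every `g = (γ, u) ∈ H` permutes
`O`, summing gives `γ s + N u = s`, hence `N (g x - x) = γ t - t` for `t = N x - s`; in particular
the `Γ`-orbit of `t` is finite. A homomorphism `𝕋 → ℝ` with torsion kernel, applied coordinatewise,
turns `t` into a vector of `ℝ^d` with finite `Γ`-orbit, which strong irreducibility forces to be `0`
when `d ≥ 2`. So `t` is torsion, and all displacements `g x - x` are killed by a common integer.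
Conversely, displacements of bounded order confine `Hx` to finitely many points, and the `g` whose
displacement is `q`-torsion form a subgroup, so it suffices to check generators. -/

namespace AddCircle

/-- Induced by a `ℚ`-linear projection `ℝ → ℝ` with kernel `ℚ`. -/
theorem exists_addMonoidHom_real_isOfFinAddOrder_of_eq_zero :
    ∃ φ : AddCircle (1 : ℝ) →+ ℝ, ∀ a, φ a = 0 → IsOfFinAddOrder a := by
  obtain ⟨C, hC⟩ := (Submodule.span ℚ {(1 : ℝ)}).exists_isCompl
  have hker : ∀ r : ℝ, C.projection _ hC.symm r = 0 ↔ ∃ c : ℚ, (c : ℝ) = r := by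
    simp [Submodule.mem_span_singleton, Rat.smul_one_eq_cast]
  refine ⟨QuotientAddGroup.lift _ (C.projection _ hC.symm).toAddMonoidHom ?_, ?_⟩
  · rintro _ ⟨n, rfl⟩
    exact (hker _).2 ⟨n, by simp⟩
  · intro a ha
    obtain ⟨r, rfl⟩ := QuotientAddGroup.mk_surjective a
    simpa [AddCircle.isOfFinAddOrder_iff_exists_rat_eq_div] using (hker r).1 ha

end AddCircle

variable {d : ℕ}

lemma Torus.finite_setOf_nsmul_eq_zero {q : ℕ} (hq : 0 < q) :
    {y : Torus d | q • y = 0}.Finite :=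
  (Set.Finite.pi fun _ => AddCircle.finite_torsion 1 hq).subset
    fun _ hy i _ => congrFun hy i

lemma projT_add (v w : Fin d → ℝ) : projT (v + w) = projT v + projT w := rfl

lemma projT_zero : projT (0 : Fin d → ℝ) = 0 := rfl

lemma projT_smul (γ : SLZ d) (v : Fin d → ℝ) : projT (γ • v) = γ • projT v := by
  funext i
  change ((∑ j, (γ.1 i j : ℝ) * v j : ℝ) : AddCircle (1 : ℝ))
    = ∑ j, γ.1 i j • (v j : AddCircle (1 : ℝ))
  simp only [← zsmul_eq_mul, ← AddCircle.coe_zsmul]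
  exact map_sum (QuotientAddGroup.mk' _) _ _

lemma affRT_one (x : Torus d) : affRT 1 x = x := by
  simp [affRT, projT_zero]

lemma affRT_mul (g h : AffR d) (x : Torus d) : affRT (g * h) x = affRT g (affRT h x) := by
  simp only [affRT, AffOf.mul_lin, AffOf.mul_trans, projT_add, projT_smul, mul_smul, smul_add]
  abel

lemma affRT_add (g : AffR d) (x τ : Torus d) : affRT g (x + τ) = affRT g x + g.lin • τ := by
  simp only [affRT, smul_add]
  abel

def torsionStabilizer (x : Torus d) (q : ℕ) : Subgroup (AffR d) where
  carrier := {g | q • (affRT g x - x) = 0}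
  one_mem' := by simp [affRT_one]
  mul_mem' := by
    intro g h (hg : q • (affRT g x - x) = 0) (hh : q • (affRT h x - x) = 0)
    show q • (affRT (g * h) x - x) = 0
    have : affRT (g * h) x - x = (affRT g x - x) + g.lin • (affRT h x - x) := by
      rw [affRT_mul, ← add_sub_cancel x (affRT h x), affRT_add, add_sub_cancel]
      abel
    rw [this, smul_add, hg, smul_comm, hh, smul_zero, add_zero]
  inv_mem' := by
    intro g (hg : q • (affRT g x - x) = 0)
    show q • (affRT g⁻¹ x - x) = 0
    have : affRT g⁻¹ x - x = -(g⁻¹.lin • (affRT g x - x)) := by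
      have hx := affRT_add g⁻¹ x (affRT g x - x)
      rw [add_sub_cancel, ← affRT_mul, inv_mul_cancel, affRT_one] at hx
      nth_rw 2 [hx]
      abel
    rw [this, smul_neg, smul_comm, hg, smul_zero, neg_zero]

lemma sum_affRT_of_finite_orbit {H : Subgroup (AffR d)} {x : Torus d}
    (hfin : ((fun g => affRT g x) '' (H : Set (AffR d))).Finite) {g : AffR d} (hg : g ∈ H) :
    ∑ y ∈ hfin.toFinset, affRT g y = ∑ y ∈ hfin.toFinset, y := by
  have hmaps : ∀ k ∈ H, ∀ y ∈ hfin.toFinset, affRT k y ∈ hfin.toFinset := by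
    simp only [Set.Finite.mem_toFinset]
    rintro k hk _ ⟨h, hh, rfl⟩
    exact ⟨k * h, H.mul_mem hk hh, affRT_mul k h x⟩
  refine Finset.sum_nbij' (affRT g) (affRT g⁻¹) (hmaps g hg) (hmaps _ (H.inv_mem hg))
    (fun y _ => ?_) (fun y _ => ?_) fun _ _ => rfl
  · rw [← affRT_mul, inv_mul_cancel, affRT_one]
  · rw [← affRT_mul, mul_inv_cancel, affRT_one]

lemma nsmul_affine_sub_self_eq {G V : Type*} [Monoid G] [AddCommGroup V]
    [DistribMulAction G V] {γ : G} {u s : V} {N : ℕ} (hs : γ • s + N • u = s) (x : V) :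
    N • (γ • x + u - x) = γ • (N • x - s) - (N • x - s) := by
  rw [smul_sub, smul_add, smul_comm, eq_sub_of_add_eq' hs, smul_sub]
  abel

lemma exists_nsmul_affRT_sub_eq_smul_sub {H : Subgroup (AffR d)} {x : Torus d}
    (hfin : ((fun g => affRT g x) '' (H : Set (AffR d))).Finite) :
    ∃ N : ℕ, 0 < N ∧ ∃ t : Torus d, ∀ g ∈ H, N • (affRT g x - x) = g.lin • t - t := by
  refine ⟨hfin.toFinset.card, Finset.card_pos.2 ⟨x, ?_⟩,
    hfin.toFinset.card • x - ∑ y ∈ hfin.toFinset, y, fun g hg => ?_⟩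
  · simpa using ⟨1, H.one_mem, affRT_one x⟩
  have hsum := sum_affRT_of_finite_orbit hfin hg
  simp only [affRT, Finset.sum_add_distrib, Finset.sum_const] at hsum
  rw [← Finset.smul_sum] at hsum
  exact nsmul_affine_sub_self_eq hsum x

/-- The lines spanned by a finite orbit of nonzero vectors would form an invariant finite union of
proper nonzero subspaces. -/
lemma eq_zero_of_finite_orbit (hd : 2 ≤ d) {Γ : Subgroup (SLZ d)}
    (hirr : SIrredR (Γ : Set (SLZ d))) {w : Fin d → ℝ}
    (hfin : ((fun γ : SLZ d => γ • w) '' (Γ : Set (SLZ d))).Finite) : w = 0 := by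
  classical
  by_contra hw
  refine hirr ⟨hfin.toFinset.image (fun z => Submodule.span ℝ {z}),
    ⟨_, Finset.mem_image_of_mem _ ((hfin.mem_toFinset).2 ⟨1, Γ.one_mem, one_smul _ w⟩)⟩, ?_, ?_⟩
  · simp only [Finset.mem_image, Set.Finite.mem_toFinset]
    rintro _ ⟨_, ⟨γ, -, rfl⟩, rfl⟩
    have hγw : γ • w ≠ 0 := (smul_ne_zero_iff_ne γ).2 hw
    refine ⟨by simpa using hγw, fun htop => ?_⟩
    have := finrank_span_singleton (K := ℝ) hγw
    rw [htop, finrank_top, Module.finrank_fin_fun] at this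
    omega
  · simp only [Finset.mem_image, Set.Finite.mem_toFinset]
    rintro γ hγ _ ⟨_, ⟨γ', hγ', rfl⟩, rfl⟩
    refine ⟨(γ * γ') • w, ⟨γ * γ', Γ.mul_mem hγ hγ', rfl⟩, ?_⟩
    rw [Submodule.map_span, Set.image_singleton, Matrix.toLin'_apply, mul_smul]
    rfl

lemma Torus.map_smul (φ : AddCircle (1 : ℝ) →+ ℝ) (γ : SLZ d) (y : Torus d) :
    (fun i => φ ((γ • y) i)) = γ • fun i => φ (y i) := by
  funext i
  change φ (∑ j, γ.1 i j • y j) = ∑ j, (γ.1 i j : ℝ) * φ (y j)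
  simp [map_sum, map_zsmul, zsmul_eq_mul]

lemma Torus.isOfFinAddOrder_of_finite_orbit (hd : 2 ≤ d) {Γ : Subgroup (SLZ d)}
    (hirr : SIrredR (Γ : Set (SLZ d))) {t : Torus d}
    (hfin : ((fun γ : SLZ d => γ • t) '' (Γ : Set (SLZ d))).Finite) : IsOfFinAddOrder t := by
  obtain ⟨φ, hφ⟩ := AddCircle.exists_addMonoidHom_real_isOfFinAddOrder_of_eq_zero
  have hw : (fun i => φ (t i)) = 0 := by
    refine eq_zero_of_finite_orbit hd hirr ((hfin.image fun y i => φ (y i)).subset ?_)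
    rintro _ ⟨γ, hγ, rfl⟩
    exact ⟨γ • t, ⟨γ, hγ, rfl⟩, Torus.map_smul φ γ t⟩
  exact IsOfFinAddOrder.pi fun i => hφ _ (congrFun hw i)

lemma Torus.exists_nsmul_smul_sub_eq_zero_of_finite_orbit {Γ : Subgroup (SLZ d)}
    (hirr : SIrredR (Γ : Set (SLZ d))) {t : Torus d}
    (hfin : ((fun γ : SLZ d => γ • t) '' (Γ : Set (SLZ d))).Finite) :
    ∃ m : ℕ, 0 < m ∧ ∀ γ ∈ Γ, m • (γ • t - t) = 0 := by
  rcases le_or_gt d 1 with hd | hd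
  · have : Subsingleton (Fin d) := Fin.subsingleton_iff_le_one.2 hd
    exact ⟨1, one_pos, fun γ _ => by simp [Subsingleton.elim γ 1]⟩
  · have ht := Torus.isOfFinAddOrder_of_finite_orbit hd hirr hfin
    refine ⟨addOrderOf t, ht.addOrderOf_pos, fun γ _ => ?_⟩
    rw [smul_sub, smul_comm, addOrderOf_nsmul_eq_zero, smul_zero, sub_zero]

lemma exists_nsmul_affRT_sub_eq_zero_of_finite_orbit {H : Subgroup (AffR d)}
    (hirr : SIrredR (H.map AffOf.linHom : Set (SLZ d))) {x : Torus d}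
    (hfin : ((fun g => affRT g x) '' (H : Set (AffR d))).Finite) :
    ∃ q : ℕ, 0 < q ∧ ∀ g ∈ H, q • (affRT g x - x) = 0 := by
  obtain ⟨N, hN, t, hNt⟩ := exists_nsmul_affRT_sub_eq_smul_sub hfin
  have htfin : ((fun γ : SLZ d => γ • t) '' (H.map AffOf.linHom : Set (SLZ d))).Finite := by
    refine (hfin.image fun y => t + N • (y - x)).subset ?_
    rintro _ ⟨_, ⟨g, hg, rfl⟩, rfl⟩
    exact ⟨affRT g x, ⟨g, hg, rfl⟩, by simp [hNt g hg, AffOf.linHom]⟩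
  obtain ⟨m, hm, hmt⟩ := Torus.exists_nsmul_smul_sub_eq_zero_of_finite_orbit hirr htfin
  exact ⟨m * N, by positivity, fun g hg => by
    rw [mul_nsmul', hNt g hg]
    exact hmt _ ⟨g, hg, rfl⟩⟩

/-- **Lemma (characterization of finite orbits).** -/
theorem finite_orbit_characterization
    {d : ℕ}
    (H : Subgroup (AffR d)) (S : Set (AffR d)) (hS : Subgroup.closure S = H)
    (Γ : Subgroup (SLZ d)) (hΓ : Γ = H.map AffOf.linHom)
    (hirr : SIrredR (Γ : Set (SLZ d)))
    (x : Torus d) :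
    (Set.Finite ((fun g : AffR d => affRT g x) '' (H : Set (AffR d))) ↔
      ∃ q : ℕ, 1 ≤ q ∧ ∀ g ∈ H, ∀ i : Fin d, q • ((affRT g x - x) i) = 0)
    ∧ ((∃ q : ℕ, 1 ≤ q ∧ ∀ g ∈ S, ∀ i : Fin d, q • ((affRT g x - x) i) = 0) ↔
      ∃ q : ℕ, 1 ≤ q ∧ ∀ g ∈ H, ∀ i : Fin d, q • ((affRT g x - x) i) = 0) := by
  have hcoord (q : ℕ) (y : Torus d) : (∀ i, q • y i = 0) ↔ q • y = 0 := by
    simp [funext_iff]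
  simp only [hcoord]
  subst hΓ
  refine ⟨⟨exists_nsmul_affRT_sub_eq_zero_of_finite_orbit hirr, ?_⟩, ⟨?_, ?_⟩⟩
  · rintro ⟨q, hq, hqH⟩
    refine ((Torus.finite_setOf_nsmul_eq_zero hq).image (x + ·)).subset ?_
    rintro _ ⟨g, hg, rfl⟩
    exact ⟨_, hqH g hg, add_sub_cancel x _⟩
  · rintro ⟨q, hq, hqS⟩
    have hH : H ≤ torsionStabilizer x q := hS ▸ (Subgroup.closure_le _).2 hqS
    exact ⟨q, hq, fun g hg => hH hg⟩
  · rintro ⟨q, hq, hqH⟩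
    exact ⟨q, hq, fun g hg => hqH g (hS ▸ Subgroup.subset_closure hg)⟩
end

section
/- Let r > 0 and let ν be a Borel probability measure on 𝕋^d satisfying max_{z ∈ 𝕋^d} ν(B(z,r)) ≤ s for some s > 0. Given a measurable function f : 𝕋^d → [0,1], there exists a probability measure ν' on 𝕋^d whose support is r-separated (hence finite) such that ∫ f dν' ≥ 2^{-d} ∫ f dν and (ν' ⊗ ν')(Δ) ≤ 2^d s / ∫ f dν. -/
set_option synthInstance.maxHeartbeats 1000000
set_option maxHeartbeats 1000000
set_option linter.unusedSectionVars false

open MeasureTheory Matrix Filter Metric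
open scoped BigOperators ENNReal Real

/-! Cut `𝕋^d` into the `n^d` half-open grid boxes of side `1/n`, with `n` even, `1/(2n) ≤ r`,
and `r ≤ 1/n` unless `n = 2`. Each box lies in a closed `r`-ball, so has `ν`-mass at most `s`, and
two distinct boxes whose indices have the same parity in every coordinate are at distance at least
`1/n ≥ r`. One of the `2^d` parity classes carries at least `2^{-d} ∫ f dν`. Replace `ν` on each box `Q` of that class
by an atom of mass `ν(Q)` at a point of `Q` where `f` is at least its mean over `Q`, and normalise
by the total mass `N ≤ 1` of the class. The atoms of the resulting `ν'` are `r`-separated,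
`∫ f dν' ≥ 2^{-d} ∫ f dν / N`, and every atom has mass at most `s / N`, whence
`(ν' ⊗ ν')(Δ) ≤ s / N ≤ 2^d s / ∫ f dν`. -/

namespace MeasureTheory

open Set

variable {X : Type*} [MeasurableSpace X]

lemma exists_mem_setIntegral_le_measureReal_mul {μ : Measure X} {f : X → ℝ} {S : Set X}
    (hfS : IntegrableOn f S μ) (hS : S.Nonempty) (hμS : μ S ≠ ∞) :
    ∃ x ∈ S, ∫ y in S, f y ∂μ ≤ μ.real S * f x := by
  by_cases hμ0 : μ S = 0
  · obtain ⟨x, hx⟩ := hS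
    refine ⟨x, hx, ?_⟩
    simp [Measure.restrict_eq_zero.mpr hμ0, measureReal_def, hμ0]
  · obtain ⟨x, hx, hle⟩ := exists_setAverage_le hμ0 hμS hfS
    refine ⟨x, hx, ?_⟩
    have hμS_pos : 0 < μ.real S := ENNReal.toReal_pos hμ0 hμS
    rwa [setAverage_eq, smul_eq_mul, inv_mul_le_iff₀ hμS_pos] at hle

lemma Measure.prod_diagonal_le [MeasurableEq X] (μ : Measure X) [SFinite μ] {a : ℝ≥0∞}
    (h : ∀ x, μ {x} ≤ a) : (μ.prod μ) (diagonal X) ≤ a * μ univ := by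
  rw [Measure.prod_apply measurableSet_diagonal]
  calc ∫⁻ x, μ (Prod.mk x ⁻¹' diagonal X) ∂μ = ∫⁻ x, μ {x} ∂μ := by
        congr! with x
        ext y
        simp [eq_comm]
    _ ≤ ∫⁻ _, a ∂μ := lintegral_mono h
    _ = a * μ univ := lintegral_const a

variable {ι : Type*} [MeasurableSingletonClass X]

lemma sum_smul_dirac_compl_image [DecidableEq X] (C : Finset ι) (w : ι → ℝ≥0∞) (t : ι → X) :
    (∑ k ∈ C, w k • Measure.dirac (t k)) (↑(C.image t))ᶜ = 0 := by
  simp only [Measure.coe_finsetSum, Finset.sum_apply, Measure.smul_apply, smul_eq_mul]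
  refine Finset.sum_eq_zero fun k hk => ?_
  rw [Measure.dirac_apply, indicator_of_notMem (by simpa using ⟨k, hk, rfl⟩), mul_zero]

lemma sum_smul_dirac_singleton_le {C : Finset ι} {w : ι → ℝ≥0∞} {t : ι → X} {a : ℝ≥0∞}
    (ht : InjOn t C) (hw : ∀ k ∈ C, w k ≤ a) (x : X) :
    (∑ k ∈ C, w k • Measure.dirac (t k)) {x} ≤ a := by
  simp only [Measure.coe_finsetSum, Finset.sum_apply, Measure.smul_apply, smul_eq_mul,
    Measure.dirac_apply]
  by_cases hx : ∃ k ∈ C, t k = x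
  · obtain ⟨k₀, hk₀, rfl⟩ := hx
    rw [Finset.sum_eq_single_of_mem k₀ hk₀ fun k hk hne => by
      rw [indicator_of_notMem (show t k ∉ ({t k₀} : Set X) from fun h => hne (ht hk hk₀ h)),
        mul_zero]]
    simpa using hw k₀ hk₀
  · refine (Finset.sum_eq_zero fun k hk => ?_).trans_le zero_le
    rw [indicator_of_notMem (show t k ∉ ({x} : Set X) from fun h => hx ⟨k, hk, h⟩), mul_zero]

lemma integral_sum_smul_dirac {C : Finset ι} {w : ι → ℝ≥0∞} (hw : ∀ k ∈ C, w k ≠ ∞) (t : ι → X)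
    (f : X → ℝ) :
    ∫ x, f x ∂(∑ k ∈ C, w k • Measure.dirac (t k)) = ∑ k ∈ C, (w k).toReal * f (t k) := by
  rw [integral_finsetSum_measure fun k hk => ?_]
  · simp [integral_smul_measure, integral_dirac]
  · exact (integrable_dirac enorm_lt_top).smul_measure (hw k hk)

noncomputable def cellDiscretization (ν : Measure X) (C : Finset ι) (cell : ι → Set X) (t : ι → X) :
    Measure X :=
  ∑ k ∈ C, ENNReal.ofReal (ν.real (cell k) / ∑ j ∈ C, ν.real (cell j)) • Measure.dirac (t k)

variable {ν : Measure X} {C : Finset ι} {cell : ι → Set X} {t : ι → X}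

lemma isProbabilityMeasure_cellDiscretization (hN : 0 < ∑ j ∈ C, ν.real (cell j)) :
    IsProbabilityMeasure (cellDiscretization ν C cell t) := by
  constructor
  simp only [cellDiscretization, Measure.coe_finsetSum, Finset.sum_apply, Measure.smul_apply,
    measure_univ, smul_eq_mul, mul_one]
  rw [← ENNReal.ofReal_sum_of_nonneg fun k _ => by positivity, ← Finset.sum_div,
    div_self hN.ne', ENNReal.ofReal_one]

lemma integral_cellDiscretization (f : X → ℝ) :
    ∫ x, f x ∂(cellDiscretization ν C cell t) =
      (∑ k ∈ C, ν.real (cell k) * f (t k)) / ∑ j ∈ C, ν.real (cell j) := by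
  rw [cellDiscretization, integral_sum_smul_dirac (fun _ _ => ENNReal.ofReal_ne_top),
    Finset.sum_div]
  refine Finset.sum_congr rfl fun k _ => ?_
  rw [ENNReal.toReal_ofReal (by positivity)]
  ring

lemma cellDiscretization_singleton_le {s : ℝ} (ht : InjOn t C)
    (hsmall : ∀ k ∈ C, ν.real (cell k) ≤ s) (x : X) :
    cellDiscretization ν C cell t {x} ≤ ENNReal.ofReal (s / ∑ j ∈ C, ν.real (cell j)) :=
  sum_smul_dirac_singleton_le ht (fun k hk => ENNReal.ofReal_le_ofReal <|
    div_le_div_of_nonneg_right (hsmall k hk) (by positivity)) x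

variable [PseudoMetricSpace X] {r : ℝ}

def SeparatedCells (r : ℝ) (C : Finset ι) (cell : ι → Set X) : Prop :=
  (C : Set ι).Pairwise fun k k' => ∀ x ∈ cell k, ∀ y ∈ cell k', r ≤ dist x y

lemma eq_of_mem_separated_cells (hr : 0 < r) (hsep : SeparatedCells r C cell) {k k' : ι}
    (hk : k ∈ C) (hk' : k' ∈ C) {x : X} (hx : x ∈ cell k) (hx' : x ∈ cell k') : k = k' := by
  by_contra hne
  have := hsep hk hk' hne x hx x hx'
  rw [dist_self] at this
  linarith

lemma sum_measureReal_le_one_of_separated [IsProbabilityMeasure ν] (hr : 0 < r)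
    (hcell : ∀ k, MeasurableSet (cell k)) (hsep : SeparatedCells r C cell) :
    ∑ k ∈ C, ν.real (cell k) ≤ 1 := by
  rw [← measureReal_biUnion_finset (fun k hk k' hk' hne => disjoint_left.mpr fun x hx hx' =>
    hne (eq_of_mem_separated_cells hr hsep hk hk' hx hx')) fun k _ => hcell k]
  exact measureReal_le_one

lemma sum_setIntegral_le_sum_measureReal [IsFiniteMeasure ν] {f : X → ℝ} (hfi : Integrable f ν)
    (hf1 : ∀ x, f x ≤ 1) : ∑ k ∈ C, ∫ x in cell k, f x ∂ν ≤ ∑ k ∈ C, ν.real (cell k) :=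
  Finset.sum_le_sum fun _ _ =>
    (integral_mono hfi.integrableOn (integrable_const 1) hf1).trans_eq (by simp)

lemma sum_setIntegral_filter_nonempty [DecidablePred fun k : ι => (cell k).Nonempty] (f : X → ℝ) :
    ∑ k ∈ C with (cell k).Nonempty, ∫ x in cell k, f x ∂ν = ∑ k ∈ C, ∫ x in cell k, f x ∂ν := by
  refine Finset.sum_filter_of_ne fun k _ hne => ?_
  by_contra hempty
  rw [not_nonempty_iff_eq_empty.mp hempty, Measure.restrict_empty, integral_zero_measure] at hne
  exact hne rfl

theorem exists_isSep_measure_of_separated_cells [MeasurableEq X] (hr : 0 < r) {s : ℝ}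
    (ν : Measure X) [IsProbabilityMeasure ν] {f : X → ℝ} (hfi : Integrable f ν)
    (hf1 : ∀ x, f x ≤ 1) (hcell : ∀ k, MeasurableSet (cell k))
    (hsmall : ∀ k ∈ C, ν.real (cell k) ≤ s) (hsep : SeparatedCells r C cell)
    (hpos : 0 < ∑ k ∈ C, ∫ x in cell k, f x ∂ν) :
    ∃ ν' : Measure X, IsProbabilityMeasure ν' ∧
      (∃ T : Finset X, ν' (↑T)ᶜ = 0 ∧ IsSep r (↑T : Set X)) ∧
      ∑ k ∈ C, ∫ x in cell k, f x ∂ν ≤ ∫ x, f x ∂ν' ∧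
      (ν'.prod ν') {q : X × X | q.1 = q.2} ≤
        ENNReal.ofReal (s / ∑ k ∈ C, ∫ x in cell k, f x ∂ν) := by
  classical
  set A := ∑ k ∈ C, ∫ x in cell k, f x ∂ν
  set C' := C.filter fun k => (cell k).Nonempty
  have hsep' : SeparatedCells r C' cell :=
    Set.Pairwise.mono (Finset.coe_subset.mpr (C.filter_subset _)) hsep
  have : Nonempty X := nonempty_of_isProbabilityMeasure ν
  have hpoints : ∀ k ∈ C', ∃ x ∈ cell k, ∫ y in cell k, f y ∂ν ≤ ν.real (cell k) * f x :=
    fun k hk => exists_mem_setIntegral_le_measureReal_mul hfi.integrableOn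
      (Finset.mem_filter.mp hk).2 (measure_ne_top ν _)
  choose! t htmem htle using hpoints
  set N := ∑ k ∈ C', ν.real (cell k)
  have hA : A = ∑ k ∈ C', ∫ x in cell k, f x ∂ν := (sum_setIntegral_filter_nonempty f).symm
  have hAN : A ≤ N := hA ▸ sum_setIntegral_le_sum_measureReal hfi hf1
  have hN : 0 < N := hpos.trans_le hAN
  have ht : InjOn t C' := fun k hk k' hk' h =>
    eq_of_mem_separated_cells hr hsep' hk hk' (htmem k hk) (h ▸ htmem k' hk')
  have := isProbabilityMeasure_cellDiscretization (t := t) hN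
  refine ⟨cellDiscretization ν C' cell t, this,
    ⟨C'.image t, sum_smul_dirac_compl_image _ _ _, ?_⟩, ?_, ?_⟩
  · simp only [IsSep, Finset.coe_image, mem_image, Finset.mem_coe]
    rintro _ ⟨k, hk, rfl⟩ _ ⟨k', hk', rfl⟩ hne
    exact hsep' hk hk' (fun h => hne (h ▸ rfl)) _ (htmem k hk) _ (htmem k' hk')
  · rw [integral_cellDiscretization]
    calc A ≤ A / N := le_div_self hpos.le hN (sum_measureReal_le_one_of_separated hr hcell hsep')
      _ ≤ _ := by
        gcongr
        rw [hA]
        exact Finset.sum_le_sum htle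
  · obtain ⟨k, hk⟩ := Finset.nonempty_of_sum_ne_zero hN.ne'
    have hs : 0 ≤ s := measureReal_nonneg.trans (hsmall k (Finset.mem_filter.mp hk).1)
    have hdiag := Measure.prod_diagonal_le (cellDiscretization ν C' cell t)
      (cellDiscretization_singleton_le ht fun k hk => hsmall k (Finset.mem_filter.mp hk).1)
    rw [measure_univ, mul_one] at hdiag
    exact hdiag.trans (ENNReal.ofReal_le_ofReal (div_le_div_of_nonneg_left hs hpos hAN))

end MeasureTheory

section Grid

open Set

lemma two_le_abs_sub_sub_mul {n a b : ℕ} (hn : Even n) (ha : a < n) (hb : b < n) (hab : a ≠ b)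
    (hpar : a % 2 = b % 2) (z : ℤ) : 2 ≤ |(a : ℤ) - b - n * z| := by
  obtain ⟨m, rfl⟩ := hn
  have hmz : (m : ℤ) * z = 0 ∨ (m : ℤ) ≤ m * z ∨ m * z ≤ -m := by
    rcases lt_trichotomy z 0 with h | rfl | h
    · exact Or.inr (Or.inr (by nlinarith))
    · exact Or.inl (mul_zero _)
    · exact Or.inr (Or.inl (by nlinarith))
  rw [show ((m + m : ℕ) : ℤ) * z = 2 * (m * z) by push_cast; ring, le_abs]
  generalize (m : ℤ) * z = w at hmz
  omega

lemma inv_le_norm_coe_sub {n a b : ℕ} (hn : Even n) (ha : a < n) (hb : b < n) (hab : a ≠ b)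
    (hpar : a % 2 = b % 2) {u v : ℝ} (hu : a ≤ n * u) (hu' : n * u < a + 1) (hv : b ≤ n * v)
    (hv' : n * v < b + 1) : (n : ℝ)⁻¹ ≤ ‖((u - v : ℝ) : UnitAddCircle)‖ := by
  have hn0 : (0 : ℝ) < n := by exact_mod_cast (Nat.zero_le a).trans_lt ha
  set z := round (u - v)
  have h2 : (2 : ℝ) ≤ |(a : ℝ) - b - n * z| := by
    exact_mod_cast two_le_abs_sub_sub_mul hn ha hb hab hpar z
  have h1 : |(a : ℝ) - b - n * (u - v)| ≤ 1 := by
    rw [abs_le]; constructor <;> linarith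
  rw [UnitAddCircle.norm_eq, inv_le_iff_one_le_mul₀ hn0]
  calc (1 : ℝ) ≤ |(a : ℝ) - b - n * z| - |(a : ℝ) - b - n * (u - v)| := by linarith
    _ ≤ |((a : ℝ) - b - n * z) - (a - b - n * (u - v))| := abs_sub_abs_le_abs_sub _ _
    _ = |u - v - z| * n := by
      rw [show (a : ℝ) - b - n * z - (a - b - n * (u - v)) = (u - v - z) * n by ring,
        abs_mul, abs_of_pos hn0]

noncomputable def circleRep (θ : UnitAddCircle) : ℝ := AddCircle.equivIco 1 0 θ

lemma circleRep_mem_Ico (θ : UnitAddCircle) : circleRep θ ∈ Ico (0 : ℝ) 1 := by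
  simpa [circleRep] using (AddCircle.equivIco 1 0 θ).2

@[simp] lemma coe_circleRep (θ : UnitAddCircle) : (circleRep θ : UnitAddCircle) = θ :=
  (AddCircle.equivIco 1 0).symm_apply_apply θ

lemma measurable_circleRep : Measurable circleRep :=
  measurable_subtype_coe.comp (AddCircle.measurableEquivIco 1 0).measurable

noncomputable def gridIndex (n : ℕ) (θ : UnitAddCircle) : ℕ := ⌊n * circleRep θ⌋₊

lemma gridIndex_le (n : ℕ) (θ : UnitAddCircle) : (gridIndex n θ : ℝ) ≤ n * circleRep θ :=
  Nat.floor_le (mul_nonneg n.cast_nonneg (circleRep_mem_Ico θ).1)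

lemma lt_gridIndex_add_one (n : ℕ) (θ : UnitAddCircle) : n * circleRep θ < gridIndex n θ + 1 :=
  Nat.lt_floor_add_one _

lemma gridIndex_lt {n : ℕ} (hn : 0 < n) (θ : UnitAddCircle) : gridIndex n θ < n := by
  refine (Nat.floor_lt (mul_nonneg n.cast_nonneg (circleRep_mem_Ico θ).1)).mpr ?_
  have := (circleRep_mem_Ico θ).2
  have : (0 : ℝ) < n := by exact_mod_cast hn
  nlinarith

lemma measurable_gridIndex (n : ℕ) : Measurable (gridIndex n) :=
  (measurable_const.mul measurable_circleRep).nat_floor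

lemma dist_gridIndex_center_le {n : ℕ} (hn : 0 < n) (θ : UnitAddCircle) :
    dist θ (((gridIndex n θ + 2⁻¹) / n : ℝ) : UnitAddCircle) ≤ (2 * n : ℝ)⁻¹ := by
  have hn0 : (0 : ℝ) < n := by exact_mod_cast hn
  have h₁ := gridIndex_le n θ
  have h₂ := lt_gridIndex_add_one n θ
  set a := gridIndex n θ
  calc dist θ (((a + 2⁻¹) / n : ℝ) : UnitAddCircle)
      = ‖((circleRep θ - (a + 2⁻¹) / n : ℝ) : UnitAddCircle)‖ := by
        rw [AddCircle.coe_sub, coe_circleRep, dist_eq_norm]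
    _ ≤ |circleRep θ - (a + 2⁻¹) / n| := QuotientAddGroup.norm_mk_le_norm
    _ ≤ (2 * n : ℝ)⁻¹ := by
        rw [abs_le]
        constructor <;> field_simp <;> linarith

lemma inv_le_dist_of_gridIndex_ne {n : ℕ} (hn : Even n) (hn0 : 0 < n) {θ φ : UnitAddCircle}
    (hne : gridIndex n θ ≠ gridIndex n φ) (hpar : gridIndex n θ % 2 = gridIndex n φ % 2) :
    (n : ℝ)⁻¹ ≤ dist θ φ := by
  rw [dist_eq_norm, ← coe_circleRep θ, ← coe_circleRep φ, ← AddCircle.coe_sub]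
  exact inv_le_norm_coe_sub hn (gridIndex_lt hn0 θ) (gridIndex_lt hn0 φ) hne hpar
    (gridIndex_le n θ) (lt_gridIndex_add_one n θ) (gridIndex_le n φ) (lt_gridIndex_add_one n φ)

variable {d n : ℕ}

def gridCell (n : ℕ) (k : Fin d → Fin n) : Set (Torus d) := {x | ∀ i, gridIndex n (x i) = k i}

noncomputable def gridCenter (n : ℕ) (k : Fin d → Fin n) : Torus d :=
  fun i => (((k i + 2⁻¹) / n : ℝ) : UnitAddCircle)

def gridParity (k : Fin d → Fin n) : Fin d → ZMod 2 := fun i => ((k i : ℕ) : ZMod 2)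

lemma measurableSet_gridCell (k : Fin d → Fin n) : MeasurableSet (gridCell n k) := by
  rw [gridCell, ofPred_forall]
  exact MeasurableSet.iInter fun i =>
    (measurable_gridIndex n).comp (measurable_pi_apply i) (measurableSet_singleton _)

lemma gridCell_subset_closedBall (hn : 0 < n) (k : Fin d → Fin n) :
    gridCell n k ⊆ closedBall (gridCenter n k) (2 * n : ℝ)⁻¹ := fun x hx =>
  mem_closedBall.mpr <| (dist_pi_le_iff (by positivity)).mpr fun i => by
    simpa [gridCenter, hx i] using dist_gridIndex_center_le hn (x i)

lemma pairwise_disjoint_gridCell :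
    Pairwise (Function.onFun Disjoint (gridCell n : (Fin d → Fin n) → Set (Torus d))) :=
  fun _ _ hne => disjoint_left.mpr fun _ hx hx' =>
    hne (funext fun i => Fin.ext ((hx i).symm.trans (hx' i)))

lemma iUnion_gridCell (hn : 0 < n) : ⋃ k, gridCell (d := d) n k = univ :=
  eq_univ_of_forall fun x => mem_iUnion.mpr ⟨fun i => ⟨_, gridIndex_lt hn (x i)⟩, fun _ => rfl⟩

lemma integral_eq_sum_gridCell (hn : 0 < n) {μ : Measure (Torus d)} {f : Torus d → ℝ}
    (hf : Integrable f μ) : ∫ x, f x ∂μ = ∑ k, ∫ x in gridCell n k, f x ∂μ := by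
  rw [← setIntegral_univ, ← iUnion_gridCell hn, integral_iUnion measurableSet_gridCell
    pairwise_disjoint_gridCell hf.integrableOn, tsum_fintype]

lemma inv_le_dist_of_gridParity_eq (hn : Even n) {k k' : Fin d → Fin n} (hne : k ≠ k')
    (hpar : gridParity k = gridParity k') {x y : Torus d} (hx : x ∈ gridCell n k)
    (hy : y ∈ gridCell n k') : (n : ℝ)⁻¹ ≤ dist x y := by
  obtain ⟨i, hi⟩ := Function.ne_iff.mp hne
  have hpar_i := (ZMod.natCast_eq_natCast_iff' _ _ 2).mp (congrFun hpar i)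
  refine (inv_le_dist_of_gridIndex_ne hn (Fin.pos (k i)) ?_ ?_).trans (dist_le_pi_dist x y i)
  · rw [hx i, hy i]; exact fun h => hi (Fin.ext h)
  · rwa [hx i, hy i]

lemma four_le_of_gridParity_eq (hn : Even n) {k k' : Fin d → Fin n} (hne : k ≠ k')
    (hpar : gridParity k = gridParity k') : 4 ≤ n := by
  obtain ⟨i, hi⟩ := Function.ne_iff.mp hne
  have hpar_i := (ZMod.natCast_eq_natCast_iff' _ _ 2).mp (congrFun hpar i)
  have := Fin.val_ne_of_ne hi
  obtain ⟨m, rfl⟩ := hn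
  have := (k i).isLt
  have := (k' i).isLt
  omega

/- For `n = 2` no two distinct cells share a parity pattern, so `r ≤ 1/n` is needed only when
`n ≥ 4`; this lets one formula for `n` serve every `r > 0`. -/
lemma exists_gridSize {r : ℝ} (hr : 0 < r) :
    ∃ n : ℕ, Even n ∧ 0 < n ∧ (2 * n : ℝ)⁻¹ ≤ r ∧ (4 ≤ n → r ≤ (n : ℝ)⁻¹) := by
  set m := ⌈(4 * r)⁻¹⌉₊
  have hm : 0 < m := Nat.ceil_pos.mpr (by positivity)
  have hr_inv : r⁻¹ = 4 * (4 * r)⁻¹ := by field_simp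
  have h_le := Nat.le_ceil (4 * r)⁻¹
  refine ⟨2 * m, even_two_mul m, by omega, ?_, fun h4 => ?_⟩
  · rw [inv_le_comm₀ (by positivity) hr]
    push_cast
    linarith
  · have h_one : 1 < (4 * r)⁻¹ := by exact_mod_cast Nat.lt_ceil.mp (show 1 < m by omega)
    have h_lt := Nat.ceil_lt_add_one (inv_nonneg.mpr (by positivity : 0 ≤ 4 * r))
    rw [le_inv_comm₀ hr (by positivity)]
    push_cast
    linarith

theorem exists_separated_gridCells {r : ℝ} (hr : 0 < r) {μ : Measure (Torus d)}
    {f : Torus d → ℝ} (hf : Integrable f μ) :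
    ∃ n, ∃ C : Finset (Fin d → Fin n), (∀ k : Fin d → Fin n, ∃ z, gridCell n k ⊆ closedBall z r) ∧
      SeparatedCells r C (gridCell n) ∧
      ((2 : ℝ) ^ d)⁻¹ * ∫ x, f x ∂μ ≤ ∑ k ∈ C, ∫ x in gridCell n k, f x ∂μ := by
  classical
  obtain ⟨n, hn_even, hn, h_ball, h_sep⟩ := exists_gridSize hr
  obtain ⟨c, hc⟩ := Fintype.exists_le_sum_fiber_of_nsmul_le_sum (f := gridParity (d := d))
    (w := fun k => ∫ x in gridCell n k, f x ∂μ) (b := ((2 : ℝ) ^ d)⁻¹ * ∫ x, f x ∂μ)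
    (by simp [← integral_eq_sum_gridCell hn hf])
  refine ⟨n, Finset.univ.filter fun k => gridParity k = c, fun k => ⟨gridCenter n k,
    (gridCell_subset_closedBall hn k).trans (closedBall_subset_closedBall h_ball)⟩,
    fun k hk k' hk' hne x hx y hy => ?_, hc⟩
  have hpar : gridParity k = gridParity k' :=
    (Finset.mem_filter.mp hk).2.trans (Finset.mem_filter.mp hk').2.symm
  exact (h_sep (four_le_of_gridParity_eq hn_even hne hpar)).trans
    (inv_le_dist_of_gridParity_eq hn_even hne hpar hx hy)

end Grid

/-- **Lemma (decomposition into separated measures).** -/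
theorem decomposition_lemma
    {d : ℕ} (r s : ℝ) (hr : 0 < r) (hs : 0 < s)
    (ν : Measure (Torus d)) [IsProbabilityMeasure ν]
    (hν : ∀ z : Torus d, ν (Metric.closedBall z r) ≤ ENNReal.ofReal s)
    (f : Torus d → ℝ) (hf : Measurable f) (hf01 : ∀ x, f x ∈ Set.Icc (0:ℝ) 1) :
    ∃ ν' : Measure (Torus d), IsProbabilityMeasure ν' ∧
      (∃ T : Finset (Torus d),
        ν' ((↑T : Set (Torus d))ᶜ) = 0 ∧ IsSep r (↑T : Set (Torus d))) ∧
      ((2:ℝ) ^ d)⁻¹ * ∫ x, f x ∂ν ≤ ∫ x, f x ∂ν' ∧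
      (ν'.prod ν') {q : Torus d × Torus d | q.1 = q.2} ≤
        ENNReal.ofReal ((2:ℝ) ^ d * s) / ENNReal.ofReal (∫ x, f x ∂ν) := by
  have hfi : Integrable f ν := .of_mem_Icc 0 1 hf.aemeasurable (ae_of_all _ hf01)
  rcases (integral_nonneg fun x => (hf01 x).1 : 0 ≤ ∫ x, f x ∂ν).eq_or_lt with hI | hI
  · refine ⟨Measure.dirac 0, inferInstance, ⟨{0}, by simp, by simp [IsSep]⟩, ?_, ?_⟩
    · rw [← hI, mul_zero, integral_dirac]
      exact (hf01 0).1
    · rw [← hI, ENNReal.ofReal_zero, ENNReal.div_zero (by positivity)]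
      exact le_top
  obtain ⟨n, C, h_ball, h_sep, h_colour⟩ := exists_separated_gridCells hr hfi
  have hsmall : ∀ k ∈ C, ν.real (gridCell n k) ≤ s := fun k _ => by
    obtain ⟨z, hz⟩ := h_ball k
    exact ENNReal.toReal_le_of_le_ofReal hs.le ((measure_mono hz).trans (hν z))
  obtain ⟨ν', hν', hT, hlow, hdiag⟩ := exists_isSep_measure_of_separated_cells hr ν hfi
    (fun x => (hf01 x).2) measurableSet_gridCell hsmall h_sep
    ((by positivity : 0 < ((2:ℝ) ^ d)⁻¹ * ∫ x, f x ∂ν).trans_le h_colour)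
  refine ⟨ν', hν', hT, h_colour.trans hlow, hdiag.trans ?_⟩
  rw [← ENNReal.ofReal_div_of_pos hI]
  refine ENNReal.ofReal_le_ofReal
    ((div_le_div_of_nonneg_left hs.le (by positivity) h_colour).trans_eq ?_)
  field_simp
end

section
/- Let p be a prime, let η be a probability measure on 𝔽_p^d and Γ ⊂ SL_d(𝔽_p) a subgroup. Assume: (1) the only Γ-orbit in 𝔽_p^d of cardinality less than p is the singleton {0}; (2) for every x ∈ 𝔽_p^d, η(x) ≤ (40/41) ‖η‖_{L²}; and (3) ‖η̂‖_{L̂⁴} ≥ 19 p^{-1/4}. Then there exists h ∈ Γ such that ‖ |η̂| − 𝒜̂^θ(h)|η̂| ‖_{L̂⁴} ≥ (7/100) ‖η̂‖_{L̂⁴}. -/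
set_option synthInstance.maxHeartbeats 1000000
set_option maxHeartbeats 1000000
set_option linter.unusedSectionVars false

open MeasureTheory Matrix Filter Metric
open scoped BigOperators ENNReal Real

/-!
Let `τ` be the autocorrelation of `η`, so that `τ̂ = |η̂|²` and, by Parseval,
`‖η̂‖_{L̂⁴}⁴ = ‖τ‖₂²`. If `|η̂|` and `|η̂| ∘ hᵀ` are within `c ‖η̂‖_{L̂⁴}` in `L̂⁴`, then
Cauchy–Schwarz applied to `|η̂|² - (|η̂| ∘ hᵀ)² = (|η̂| - |η̂| ∘ hᵀ) (|η̂| + |η̂| ∘ hᵀ)`,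
followed by Parseval, gives `⟨τ, τ ∘ h⁻¹⟩ ≥ (1 - 2c²) ‖τ‖₂²`. On the other hand every
`Γ`-orbit other than `{0}` has at least `p` points, so averaging `⟨τ, τ ∘ g⟩` over `g ∈ Γ`
yields some `g` with `⟨τ, τ ∘ g⟩ ≤ τ(0)² + 1/p`. The mass bound gives
`‖τ‖₂² ≥ (2 - (40/41)²) τ(0)²` and the `L̂⁴` bound gives `‖τ‖₂² ≥ 19⁴/p`; for `c = 7/100`
these three estimates are incompatible.
-/

open Finset

section Autocorrelation

variable {G : Type*} [Fintype G] [AddCommGroup G]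

def autocorr (f : G → ℝ) (x : G) : ℝ := ∑ y, f y * f (y - x)

lemma autocorr_zero (f : G → ℝ) : autocorr f 0 = ∑ y, f y ^ 2 := by
  simp only [autocorr, sub_zero, sq]

lemma autocorr_nonneg {f : G → ℝ} (hf : ∀ x, 0 ≤ f x) (x : G) : 0 ≤ autocorr f x :=
  sum_nonneg fun y _ => mul_nonneg (hf y) (hf _)

lemma sum_autocorr (f : G → ℝ) : ∑ x, autocorr f x = (∑ x, f x) ^ 2 := by
  simp only [autocorr]
  rw [sum_comm, sq, sum_mul_sum]
  refine sum_congr rfl fun y _ => ?_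
  rw [← mul_sum, ← mul_sum]
  exact congrArg _ (Equiv.sum_comp (Equiv.subLeft y) f)

lemma autocorr_sq_le_sq_autocorr {f : G → ℝ} (hf : ∀ x, 0 ≤ f x) (x : G) :
    autocorr (fun y => f y ^ 2) x ≤ autocorr f x ^ 2 := by
  simp only [autocorr, ← mul_pow]
  exact sum_sq_le_sq_sum_of_nonneg fun y _ => mul_nonneg (hf y) (hf _)

theorem mul_sq_sum_sq_le_sum_autocorr_sq {f : G → ℝ} (hf : ∀ x, 0 ≤ f x) {m : ℝ}
    (hm : ∀ x, f x ≤ m * l2R f) :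
    (2 - m ^ 2) * (∑ x, f x ^ 2) ^ 2 ≤ ∑ x, autocorr f x ^ 2 := by
  classical
  have hsq (x : G) : f x ^ 2 ≤ m ^ 2 * ∑ y, f y ^ 2 :=
    calc f x ^ 2 ≤ (m * l2R f) ^ 2 := pow_le_pow_left₀ (hf x) (hm x) 2
      _ = m ^ 2 * ∑ y, f y ^ 2 := by
        rw [mul_pow, l2R, Real.sq_sqrt (sum_nonneg fun y _ => sq_nonneg _)]
  have hdiag : autocorr (fun y => f y ^ 2) 0 ≤ m ^ 2 * (∑ y, f y ^ 2) ^ 2 :=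
    calc autocorr (fun y => f y ^ 2) 0 = ∑ y, f y ^ 2 * f y ^ 2 := by
          rw [autocorr_zero, sum_congr rfl fun y _ => sq (f y ^ 2)]
      _ ≤ ∑ y, m ^ 2 * (∑ y, f y ^ 2) * f y ^ 2 :=
        sum_le_sum fun y _ => mul_le_mul_of_nonneg_right (hsq y) (sq_nonneg _)
      _ = m ^ 2 * (∑ y, f y ^ 2) ^ 2 := by rw [← mul_sum]; ring
  have hoff : ∑ x ∈ univ.erase 0, autocorr (fun y => f y ^ 2) x ≤
      ∑ x ∈ univ.erase 0, autocorr f x ^ 2 :=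
    sum_le_sum fun x _ => autocorr_sq_le_sq_autocorr hf x
  have htotal := sum_autocorr (fun y => f y ^ 2)
  rw [← add_sum_erase _ _ (mem_univ 0)] at htotal
  rw [← add_sum_erase univ (fun x => autocorr f x ^ 2) (mem_univ 0), autocorr_zero f]
  linarith

end Autocorrelation

lemma sum_sq_sub_sq_sq_le {ι : Type*} (s : Finset ι) (u v : ι → ℝ) {c S : ℝ}
    (hu : ∑ i ∈ s, u i ^ 4 = S) (hv : ∑ i ∈ s, v i ^ 4 = S)
    (huv : ∑ i ∈ s, (u i - v i) ^ 4 ≤ c ^ 4 * S) :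
    ∑ i ∈ s, (u i ^ 2 - v i ^ 2) ^ 2 ≤ 4 * c ^ 2 * S := by
  have hS : 0 ≤ S := hu ▸ sum_nonneg fun i _ => by positivity
  have hplus : ∑ i ∈ s, (u i + v i) ^ 4 ≤ 16 * S := by
    have hpt (x y : ℝ) : (x + y) ^ 4 ≤ 8 * (x ^ 4 + y ^ 4) := by
      nlinarith [sq_nonneg (x - y), sq_nonneg (x + y), sq_nonneg (x ^ 2 - y ^ 2)]
    calc ∑ i ∈ s, (u i + v i) ^ 4 ≤ ∑ i ∈ s, 8 * (u i ^ 4 + v i ^ 4) :=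
          sum_le_sum fun i _ => hpt (u i) (v i)
      _ = 16 * S := by rw [← mul_sum, sum_add_distrib, hu, hv]; ring
  have hCS : (∑ i ∈ s, (u i ^ 2 - v i ^ 2) ^ 2) ^ 2 ≤
      (∑ i ∈ s, (u i - v i) ^ 4) * ∑ i ∈ s, (u i + v i) ^ 4 := by
    have hfactor (x y : ℝ) : (x ^ 2 - y ^ 2) ^ 2 = (x - y) ^ 2 * (x + y) ^ 2 := by ring
    have hpow (x : ℝ) : x ^ 4 = (x ^ 2) ^ 2 := by ring
    simp only [hfactor, hpow]
    exact sum_mul_sq_le_sq_mul_sq s (fun i => (u i - v i) ^ 2) (fun i => (u i + v i) ^ 2)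
  refine (sq_le_sq₀ (sum_nonneg fun i _ => sq_nonneg _) (by positivity)).mp ?_
  calc _ ≤ (c ^ 4 * S) * (16 * S) :=
        hCS.trans (mul_le_mul huv hplus (sum_nonneg fun i _ => by positivity) (by positivity))
    _ = (4 * c ^ 2 * S) ^ 2 := by ring

section Fourier

variable {p d : ℕ} [NeZero p]

lemma fhat_eq_sum_stdAddChar (f : (Fin d → ZMod p) → ℝ) (a : Fin d → ZMod p) :
    fhat f a = ∑ x, ZMod.stdAddChar (a ⬝ᵥ x) * f x := by
  simp only [fhat, ZMod.stdAddChar_apply, ZMod.toCircle_apply, dotProduct]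

lemma conj_stdAddChar (t : ZMod p) :
    starRingEnd ℂ (ZMod.stdAddChar t) = ZMod.stdAddChar (-t) := by
  rw [ZMod.stdAddChar_apply, ZMod.stdAddChar_apply, AddChar.map_neg_eq_inv,
    Circle.coe_inv_eq_conj]

lemma sum_stdAddChar_dotProduct (x : Fin d → ZMod p) :
    ∑ a : Fin d → ZMod p, ZMod.stdAddChar (a ⬝ᵥ x) = if x = 0 then (p : ℂ) ^ d else 0 := by
  let ψ : AddChar (Fin d → ZMod p) ℂ :=
    { toFun := fun a => ZMod.stdAddChar (a ⬝ᵥ x)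
      map_zero_eq_one' := by simp
      map_add_eq_mul' := fun a b => by simp [add_dotProduct, AddChar.map_add_eq_mul] }
  have hψ : ψ = 0 ↔ x = 0 := by
    refine ⟨fun h => funext fun i => ?_, fun h => by ext a; simp [ψ, h]⟩
    have hi := DFunLike.congr_fun h (Pi.single i 1)
    simp only [ψ, AddChar.coe_mk, AddChar.zero_apply, single_dotProduct, one_mul] at hi
    exact ZMod.injective_stdAddChar (hi.trans (AddChar.map_zero_eq_one _).symm)
  classical
  calc ∑ a, ZMod.stdAddChar (a ⬝ᵥ x) = ∑ a, ψ a := rfl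
    _ = _ := by rw [AddChar.sum_eq_ite]; simp [hψ, ZMod.card]

lemma sum_fhat (f : (Fin d → ZMod p) → ℝ) : ∑ a, fhat f a = (p : ℂ) ^ d * f 0 := by
  simp_rw [fhat_eq_sum_stdAddChar]
  rw [sum_comm]
  simp_rw [← sum_mul, sum_stdAddChar_dotProduct, ite_mul, zero_mul, sum_ite_eq']
  simp

lemma fhat_autocorr (f : (Fin d → ZMod p) → ℝ) (a : Fin d → ZMod p) :
    fhat (autocorr f) a = ((‖fhat f a‖ ^ 2 : ℝ) : ℂ) := by
  rw [Complex.ofReal_pow, ← Complex.mul_conj']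
  simp only [fhat_eq_sum_stdAddChar]
  rw [map_sum, sum_mul_sum]
  simp only [autocorr, Complex.ofReal_sum, Complex.ofReal_mul, mul_sum]
  rw [sum_comm]
  refine sum_congr rfl fun y _ => ?_
  rw [← Equiv.sum_comp (Equiv.subLeft y)]
  refine sum_congr rfl fun z _ => ?_
  simp only [Equiv.subLeft_apply, sub_sub_cancel, map_mul, Complex.conj_ofReal, conj_stdAddChar,
    ← dotProduct_neg]
  rw [sub_eq_add_neg, dotProduct_add, AddChar.map_add_eq_mul]
  ring

theorem sum_norm_fhat_sq (f : (Fin d → ZMod p) → ℝ) :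
    ∑ a, ‖fhat f a‖ ^ 2 = (p : ℝ) ^ d * ∑ x, f x ^ 2 := by
  -- Parseval is Fourier inversion at `0` for the autocorrelation.
  have h := sum_fhat (autocorr f)
  simp only [fhat_autocorr, autocorr_zero] at h
  exact_mod_cast h

lemma fhat_sub (f g : (Fin d → ZMod p) → ℝ) (a : Fin d → ZMod p) :
    fhat (f - g) a = fhat f a - fhat g a := by
  simp only [fhat_eq_sum_stdAddChar, Pi.sub_apply, Complex.ofReal_sub, mul_sub, sum_sub_distrib]

lemma fhat_comp_smul_inv (f : (Fin d → ZMod p) → ℝ)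
    (g : Matrix.SpecialLinearGroup (Fin d) (ZMod p)) (a : Fin d → ZMod p) :
    fhat (fun x => f (g⁻¹ • x)) a = fhat f (g.1ᵀ *ᵥ a) := by
  simp only [fhat_eq_sum_stdAddChar]
  refine Fintype.sum_equiv (MulAction.toPerm g⁻¹) _ _ fun x => ?_
  have hinv : g.1 * (g⁻¹).1 = 1 := congrArg Subtype.val (mul_inv_cancel g)
  have hdot : (g.1ᵀ *ᵥ a) ⬝ᵥ ((g⁻¹).1 *ᵥ x) = a ⬝ᵥ x := by
    rw [mulVec_transpose, ← dotProduct_mulVec, mulVec_mulVec, hinv, one_mulVec]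
  rw [MulAction.toPerm_apply, ← hdot]
  rfl

lemma hatL4_nonneg (φ : (Fin d → ZMod p) → ℝ) : 0 ≤ hatL4 φ :=
  Real.rpow_nonneg (by positivity) _

lemma hatL4_pow_four (φ : (Fin d → ZMod p) → ℝ) :
    hatL4 φ ^ 4 = ((p : ℝ) ^ d)⁻¹ * ∑ a, φ a ^ 4 := by
  have hnonneg : 0 ≤ (p : ℝ) ^ (-(d : ℤ)) * ∑ a, |φ a| ^ 4 := by positivity
  rw [hatL4, ← Real.rpow_natCast, ← Real.rpow_mul hnonneg,
    show (1 : ℝ) / 4 * (4 : ℕ) = 1 by norm_num, Real.rpow_one, _root_.zpow_neg, zpow_natCast]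
  simp only [Even.pow_abs ⟨2, rfl⟩]

lemma hatL4_norm_fhat_pow_four (f : (Fin d → ZMod p) → ℝ) :
    hatL4 (fun a => ‖fhat f a‖) ^ 4 = ∑ x, autocorr f x ^ 2 := by
  have hp : (p : ℝ) ^ d ≠ 0 := pow_ne_zero _ (Nat.cast_ne_zero.mpr (NeZero.ne p))
  have h := sum_norm_fhat_sq (autocorr f)
  simp only [fhat_autocorr, Complex.norm_real, Real.norm_eq_abs, sq_abs, ← pow_mul] at h
  rw [hatL4_pow_four, h, inv_mul_cancel_left₀ hp]

lemma sum_norm_fhat_pow_four (f : (Fin d → ZMod p) → ℝ) :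
    ∑ a, ‖fhat f a‖ ^ 4 = (p : ℝ) ^ d * ∑ x, autocorr f x ^ 2 := by
  have hP : (p : ℝ) ^ d ≠ 0 := pow_ne_zero _ (Nat.cast_ne_zero.mpr (NeZero.ne p))
  rw [← hatL4_norm_fhat_pow_four, hatL4_pow_four, mul_inv_cancel_left₀ hP]

lemma sum_norm_fhat_transpose_mulVec_pow_four (f : (Fin d → ZMod p) → ℝ)
    (h : Matrix.SpecialLinearGroup (Fin d) (ZMod p)) :
    ∑ a, ‖fhat f (h.1ᵀ *ᵥ a)‖ ^ 4 = ∑ a, ‖fhat f a‖ ^ 4 :=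
  Fintype.sum_equiv (MulAction.toPerm (SpecialLinearGroup.transpose h)) _ _ fun _ => rfl

lemma sum_sq_norm_fhat_sub_sq_norm_fhat_transpose (f : (Fin d → ZMod p) → ℝ)
    (h : Matrix.SpecialLinearGroup (Fin d) (ZMod p)) :
    ∑ a, (‖fhat f a‖ ^ 2 - ‖fhat f (h.1ᵀ *ᵥ a)‖ ^ 2) ^ 2 =
      (p : ℝ) ^ d * ∑ x, (autocorr f x - autocorr f (h⁻¹ • x)) ^ 2 := by
  have hparseval := sum_norm_fhat_sq (autocorr f - fun x => autocorr f (h⁻¹ • x))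
  simp only [Pi.sub_apply] at hparseval
  rw [← hparseval]
  refine sum_congr rfl fun a _ => ?_
  rw [fhat_sub, fhat_comp_smul_inv, fhat_autocorr, fhat_autocorr, ← Complex.ofReal_sub,
    Complex.norm_real, Real.norm_eq_abs, sq_abs]

lemma sum_sq_sub_smul_eq (τ : (Fin d → ZMod p) → ℝ)
    (g : Matrix.SpecialLinearGroup (Fin d) (ZMod p)) :
    ∑ x, (τ x - τ (g • x)) ^ 2 = 2 * ∑ x, τ x ^ 2 - 2 * ∑ x, τ x * τ (g • x) := by
  have hτ : ∑ x, τ (g • x) ^ 2 = ∑ x, τ x ^ 2 :=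
    Fintype.sum_equiv (MulAction.toPerm g) _ _ fun _ => rfl
  simp only [sub_sq, sum_add_distrib, sum_sub_distrib, mul_assoc, ← mul_sum, hτ]
  ring

theorem le_sum_autocorr_mul_smul_of_hatL4_sub_le (f : (Fin d → ZMod p) → ℝ)
    (h : Matrix.SpecialLinearGroup (Fin d) (ZMod p)) {c : ℝ}
    (hc : hatL4 (fun a => ‖fhat f a‖ - ‖fhat f (h.1ᵀ *ᵥ a)‖) ≤ c * hatL4 (fun a => ‖fhat f a‖)) :
    (1 - 2 * c ^ 2) * ∑ x, autocorr f x ^ 2 ≤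
      ∑ x, autocorr f x * autocorr f (h⁻¹ • x) := by
  have hP : (0 : ℝ) < (p : ℝ) ^ d := pow_pos (Nat.cast_pos.mpr (NeZero.pos p)) d
  have huv : ∑ a, (‖fhat f a‖ - ‖fhat f (h.1ᵀ *ᵥ a)‖) ^ 4 ≤
      c ^ 4 * ((p : ℝ) ^ d * ∑ x, autocorr f x ^ 2) := by
    have h4 := pow_le_pow_left₀ (hatL4_nonneg _) hc 4
    rw [mul_pow, hatL4_norm_fhat_pow_four, hatL4_pow_four, inv_mul_le_iff₀ hP] at h4
    linarith
  have key := sum_sq_sub_sq_sq_le univ _ _ (sum_norm_fhat_pow_four f)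
    ((sum_norm_fhat_transpose_mulVec_pow_four f h).trans (sum_norm_fhat_pow_four f)) huv
  rw [sum_sq_norm_fhat_sub_sq_norm_fhat_transpose, sum_sq_sub_smul_eq, mul_left_comm] at key
  linarith [le_of_mul_le_mul_left key hP]

end Fourier

section OrbitAverage

open MulAction

variable {G X : Type*} [Group G] [Fintype G] [MulAction G X] [Fintype X]

lemma sum_smul_eq_of_mem_orbit (f : X → ℝ) {x y : X} (hy : y ∈ orbit G x) :
    ∑ g : G, f (g • y) = ∑ g : G, f (g • x) := by
  obtain ⟨k, rfl⟩ := hy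
  exact Fintype.sum_equiv (Equiv.mulRight k) _ _ fun g => by simp [mul_smul]

lemma ncard_orbit_mul_sum_smul_le {f : X → ℝ} (hf : ∀ y, 0 ≤ f y) (x : X) :
    (orbit G x).ncard * ∑ g : G, f (g • x) ≤ Fintype.card G * ∑ y, f y := by
  classical
  calc (orbit G x).ncard * ∑ g : G, f (g • x)
      = ∑ y ∈ (orbit G x).toFinset, ∑ g : G, f (g • y) := by
        rw [sum_congr rfl fun y hy => sum_smul_eq_of_mem_orbit f (Set.mem_toFinset.mp hy),
          sum_const, Set.ncard_eq_toFinset_card', nsmul_eq_mul]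
    _ ≤ ∑ y, ∑ g : G, f (g • y) :=
        sum_le_sum_of_subset_of_nonneg (subset_univ _) fun y _ _ => sum_nonneg fun g _ => hf _
    _ = ∑ g : G, ∑ y, f (g • y) := sum_comm
    _ = Fintype.card G * ∑ y, f y := by
        rw [sum_congr rfl fun g _ => Fintype.sum_equiv (toPerm g) (fun y => f (g • y)) f
          fun _ => rfl, sum_const, card_univ, nsmul_eq_mul]

theorem exists_sum_mul_smul_le {τ : X → ℝ} (hτ : ∀ y, 0 ≤ τ y) {x₀ : X}
    (hx₀ : ∀ g : G, g • x₀ = x₀) {N : ℕ} (hN : 0 < N)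
    (horbit : ∀ x, x ≠ x₀ → N ≤ (orbit G x).ncard) :
    ∃ g : G, ∑ x, τ x * τ (g • x) ≤ τ x₀ ^ 2 + (∑ x, τ x) ^ 2 / N := by
  classical
  have hNR : (0 : ℝ) < N := Nat.cast_pos.mpr hN
  have horbit_sum : ∀ x, x ≠ x₀ → ∑ g : G, τ (g • x) ≤ Fintype.card G * ((∑ y, τ y) / N) := by
    intro x hx
    rw [mul_div_assoc', le_div_iff₀ hNR, mul_comm]
    exact (mul_le_mul_of_nonneg_right (by exact_mod_cast horbit x hx)
      (sum_nonneg fun g _ => hτ _)).trans (ncard_orbit_mul_sum_smul_le hτ x)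
  have htotal : ∑ g : G, ∑ x, τ x * τ (g • x) ≤
      ∑ _g : G, (τ x₀ ^ 2 + (∑ x, τ x) ^ 2 / N) := by
    calc ∑ g : G, ∑ x, τ x * τ (g • x) = ∑ x, τ x * ∑ g : G, τ (g • x) := by
          rw [sum_comm]; simp only [mul_sum]
      _ = τ x₀ * (Fintype.card G * τ x₀) +
            ∑ x ∈ univ.erase x₀, τ x * ∑ g : G, τ (g • x) := by
          rw [← add_sum_erase _ _ (mem_univ x₀)]
          simp only [hx₀, sum_const, card_univ, nsmul_eq_mul]
      _ ≤ τ x₀ * (Fintype.card G * τ x₀) + ∑ x, τ x * (Fintype.card G * ((∑ y, τ y) / N)) := by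
          have hS : 0 ≤ (∑ y, τ y) / N := div_nonneg (sum_nonneg fun y _ => hτ y) hNR.le
          gcongr
          exact (sum_le_sum fun x hx => mul_le_mul_of_nonneg_left
              (horbit_sum x (ne_of_mem_erase hx)) (hτ x)).trans
            (sum_le_sum_of_subset_of_nonneg (erase_subset _ _) fun x _ _ =>
              mul_nonneg (hτ x) (by positivity))
      _ = ∑ _g : G, (τ x₀ ^ 2 + (∑ x, τ x) ^ 2 / N) := by
          rw [← sum_mul, sum_const, card_univ, nsmul_eq_mul]
          ring
  obtain ⟨g, -, hg⟩ := exists_le_of_sum_le univ_nonempty htotal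
  exact ⟨g, hg⟩

end OrbitAverage

lemma orbitSet_eq_orbit {p d : ℕ} (Γ : Subgroup (Matrix.SpecialLinearGroup (Fin d) (ZMod p)))
    (x : Fin d → ZMod p) : orbitSet (Γ : Set (Matrix.SpecialLinearGroup (Fin d) (ZMod p))) x =
      MulAction.orbit Γ x := by
  ext y
  simp only [orbitSet, Set.mem_image, SetLike.mem_coe, MulAction.mem_orbit_iff, Subtype.exists,
    Subgroup.mk_smul, exists_prop]
  rfl

theorem mazur_map_gap_general
    {p d : ℕ} [NeZero p]
    (Γ : Subgroup (Matrix.SpecialLinearGroup (Fin d) (ZMod p)))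
    (η : (Fin d → ZMod p) → ℝ) (hηnn : ∀ x, 0 ≤ η x) (hη1 : ∑ x, η x = 1)
    (horb : ∀ x : Fin d → ZMod p,
      (orbitSet (Γ : Set (Matrix.SpecialLinearGroup (Fin d) (ZMod p))) x).ncard < p → x = 0)
    (hmass : ∀ x : Fin d → ZMod p, η x ≤ (40 / 41) * l2R η)
    (hL4 : 19 * (p : ℝ) ^ (-(1:ℝ)/4) ≤ hatL4 (fun a => ‖fhat η a‖)) :
    ∃ h ∈ Γ,
      (7 / 100) * hatL4 (fun a => ‖fhat η a‖) ≤
        hatL4 (fun a =>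
          ‖fhat η a‖ - ‖fhat η (h.1.transpose.mulVec a)‖) := by
  have hp : (0 : ℝ) < p := Nat.cast_pos.mpr (NeZero.pos p)
  have hlarge : (19 : ℝ) ^ 4 * (p : ℝ)⁻¹ ≤ ∑ x, autocorr η x ^ 2 := by
    rw [← hatL4_norm_fhat_pow_four]
    calc (19 : ℝ) ^ 4 * (p : ℝ)⁻¹ = (19 * (p : ℝ) ^ (-(1 : ℝ) / 4)) ^ 4 := by
          rw [mul_pow, ← Real.rpow_natCast ((p : ℝ) ^ (-(1 : ℝ) / 4)) 4, ← Real.rpow_mul hp.le]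
          norm_num [Real.rpow_neg_one]
      _ ≤ _ := pow_le_pow_left₀ (by positivity) hL4 4
  have hspread := mul_sq_sum_sq_le_sum_autocorr_sq hηnn hmass
  obtain ⟨g, hg⟩ := exists_sum_mul_smul_le (G := Γ) (autocorr_nonneg hηnn) (x₀ := 0)
    (fun g => smul_zero g) (NeZero.pos p) fun x hx =>
      not_lt.mp fun hlt => hx (horb x ((orbitSet_eq_orbit Γ x).symm ▸ hlt))
  rw [autocorr_zero, sum_autocorr, hη1, one_pow, one_pow, one_div] at hg
  simp only [Subgroup.smul_def] at hg
  refine ⟨(g : Matrix.SpecialLinearGroup (Fin d) (ZMod p))⁻¹, inv_mem g.2, not_lt.mp fun hlt => ?_⟩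
  have hcorr := le_sum_autocorr_mul_smul_of_hatL4_sub_le η _ hlt.le
  rw [inv_inv] at hcorr
  linarith [hcorr.trans hg, inv_pos.mpr hp]

/-- **Lemma (a Fourier `L̂⁴`-difference bound, after Lindenstrauss–Varjú).** -/
theorem mazur_map_gap
    {p d : ℕ} [NeZero p] (hp : p.Prime)
    (Γ : Subgroup (Matrix.SpecialLinearGroup (Fin d) (ZMod p)))
    (η : (Fin d → ZMod p) → ℝ) (hηnn : ∀ x, 0 ≤ η x) (hη1 : ∑ x, η x = 1)
    (horb : ∀ x : Fin d → ZMod p,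
      (orbitSet (Γ : Set (Matrix.SpecialLinearGroup (Fin d) (ZMod p))) x).ncard < p → x = 0)
    (hmass : ∀ x : Fin d → ZMod p, η x ≤ (40 / 41) * l2R η)
    (hL4 : 19 * (p : ℝ) ^ (-(1:ℝ)/4) ≤ hatL4 (fun a => ‖fhat η a‖)) :
    ∃ h ∈ Γ,
      (7 / 100) * hatL4 (fun a => ‖fhat η a‖) ≤
        hatL4 (fun a =>
          ‖fhat η a‖ - ‖fhat η (h.1.transpose.mulVec a)‖) :=
  mazur_map_gap_general Γ η hηnn hη1 horb hmass hL4
end
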